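/- For every source p and every codeword-length vector l ∈ ℒ_n, if μ = l(1) then R*(l,p) ≥ μ + lg max(p(1), (1 − p(1))/(2^μ − 1)). -/

import Mathlib

/-- A source: a positive, monotonically nonincreasing probability mass function on `Fin n`. -/
def IsSource (n : ℕ) (p : Fin n → ℝ) : Prop :=
  (∀ i, 0 < p i) ∧ (∑ i, p i = 1) ∧ (∀ i j : Fin n, i ≤ j → p j ≤ p i)

/-- A codeword-length vector: positive integer lengths satisfying the Kraft inequality. -/
def IsCLV (n : ℕ) (l : Fin n → ℤ) : Prop :=
  (∀ i, 1 ≤ l i) ∧ (∑ i, (2:ℝ) ^ (-(l i)) ≤ 1)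

/-- Maximum pointwise redundancy `R*(l,p) = max_i (l(i) + lg p(i))`. -/
noncomputable def Rstar (n : ℕ) (l : Fin n → ℤ) (p : Fin n → ℝ) : ℝ :=
  ⨆ i : Fin n, ((l i : ℝ) + Real.logb 2 (p i))

/-- Minimum maximum pointwise redundancy over all codeword-length vectors. -/
noncomputable def RstarOpt (n : ℕ) (p : Fin n → ℝ) : ℝ :=
  sInf {r : ℝ | ∃ l : Fin n → ℤ, IsCLV n l ∧ Rstar n l p = r}

/-!
The bound `R* ≥ μ + lg p(1)` is the term `i = 1` of the maximum. For the other bound, the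
symbols `i ≠ 1` carry probability `1 - p(1)` and, by Kraft, codeword weight
`∑_{i ≠ 1} 2^{-l(i)} ≤ 1 - 2^{-μ} = (2^μ - 1) / 2^μ`; so some `i ≠ 1` has
`p(i) / 2^{-l(i)}` at least the ratio `2^μ (1 - p(1)) / (2^μ - 1)` of the totals, which is
`l(i) + lg p(i) ≥ μ + lg ((1 - p(1)) / (2^μ - 1))`.
-/

open Finset Real

lemma le_Rstar {n : ℕ} (l : Fin n → ℤ) (p : Fin n → ℝ) (i : Fin n) :
    (l i : ℝ) + logb 2 (p i) ≤ Rstar n l p :=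
  le_ciSup (f := fun i ↦ (l i : ℝ) + logb 2 (p i)) (Set.finite_range _).bddAbove i

lemma add_logb_two_le_add_logb_two {a b : ℤ} {x y : ℝ} (hx : 0 < x)
    (h : (2:ℝ) ^ a * x ≤ 2 ^ b * y) : (a : ℝ) + logb 2 x ≤ b + logb 2 y := by
  have hy : 0 < y := pos_of_mul_pos_right ((by positivity : 0 < (2:ℝ) ^ a * x).trans_le h)
    (by positivity)
  have logb_two_zpow (m : ℤ) : logb 2 ((2:ℝ) ^ m) = m := by
    rw [← rpow_intCast, logb_rpow two_pos (by norm_num)]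
  calc (a : ℝ) + logb 2 x = logb 2 ((2:ℝ) ^ a * x) := by
        rw [logb_mul (by positivity) hx.ne', logb_two_zpow]
    _ ≤ logb 2 ((2:ℝ) ^ b * y) := logb_le_logb_of_le one_lt_two (by positivity) h
    _ = b + logb 2 y := by rw [logb_mul (by positivity) hy.ne', logb_two_zpow]

lemma exists_two_zpow_mul_ge_of_kraft {ι : Type*} [Fintype ι] [DecidableEq ι] [Nontrivial ι]
    {p : ι → ℝ} {l : ι → ℤ} (hp : ∀ i, 0 ≤ p i) (hsum : ∑ i, p i = 1)
    (hkraft : ∑ i, (2:ℝ) ^ (-l i) ≤ 1) (j : ι) (hj : 1 ≤ l j) :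
    ∃ i, (2:ℝ) ^ l j * ((1 - p j) / (2 ^ l j - 1)) ≤ 2 ^ l i * p i := by
  have hK : (0:ℝ) < 2 ^ l j - 1 := by
    have : (2:ℝ) ≤ 2 ^ l j := by simpa using zpow_le_zpow_right₀ one_le_two hj
    linarith
  set c : ℝ := 2 ^ l j * ((1 - p j) / (2 ^ l j - 1)) with hc
  have tail_prob : ∑ i ∈ univ.erase j, p i = 1 - p j := by
    rw [sum_erase_eq_sub (mem_univ j), hsum]
  have tail_kraft : ∑ i ∈ univ.erase j, (2:ℝ) ^ (-l i) ≤ 1 - 2 ^ (-l j) := by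
    rw [sum_erase_eq_sub (mem_univ j)]
    linarith
  have tail_ratio : ∑ i ∈ univ.erase j, c * 2 ^ (-l i) ≤ ∑ i ∈ univ.erase j, p i := by
    have hq : 0 ≤ 1 - p j := tail_prob ▸ sum_nonneg fun i _ ↦ hp i
    calc ∑ i ∈ univ.erase j, c * 2 ^ (-l i) ≤ c * (1 - 2 ^ (-l j)) := by
          rw [← mul_sum]
          exact mul_le_mul_of_nonneg_left tail_kraft (by positivity)
      _ = ∑ i ∈ univ.erase j, p i := by
          rw [tail_prob, hc, zpow_neg]
          field_simp
  obtain ⟨i, -, hi⟩ := exists_le_of_sum_le (univ_nontrivial.erase_nonempty) tail_ratio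
  refine ⟨i, ?_⟩
  rwa [zpow_neg, ← div_eq_mul_inv, div_le_iff₀ (by positivity), mul_comm (p i)] at hi

theorem stmt8 (n : ℕ) (hn : 2 ≤ n) (p : Fin n → ℝ) (hp : IsSource n p)
    (l : Fin n → ℤ) (hl : IsCLV n l) (μ : ℤ) (hμ : μ = l ⟨0, by omega⟩) :
    (μ:ℝ) + Real.logb 2 (max (p ⟨0, by omega⟩)
      ((1 - p ⟨0, by omega⟩) / ((2:ℝ) ^ μ - 1))) ≤ Rstar n l p := by
  obtain ⟨hpos, hsum, -⟩ := hp
  obtain ⟨hl1, hkraft⟩ := hl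
  have : Nontrivial (Fin n) := Fin.nontrivial_iff_two_le.mpr hn
  subst hμ
  set j : Fin n := ⟨0, by omega⟩
  rcases le_total (p j) ((1 - p j) / (2 ^ l j - 1)) with h | h
  · rw [max_eq_right h]
    obtain ⟨i, hi⟩ := exists_two_zpow_mul_ge_of_kraft (fun i ↦ (hpos i).le) hsum hkraft j (hl1 j)
    exact (add_logb_two_le_add_logb_two ((hpos j).trans_le h) hi).trans (le_Rstar l p i)
  · rw [max_eq_left h]
    exact le_Rstar l p j
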